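/- For any two two-terminal graphs G₁, G₂ whose polynomials Z^dif(Gᵢ;q) are not identically zero, with effective edge interactions y_{Gᵢ} := (q−1)·Z^same(Gᵢ;q)/Z^dif(Gᵢ;q) regarded as elements of the field ℂ(q) of rational functions in q, the following identities hold in ℂ(q): y_{G₁∥G₂} = y_{G₁}·y_{G₂}, and y_{G₁⋈G₂}·(y_{G₁} + y_{G₂} + q − 2) = y_{G₁}·y_{G₂} + q − 1 (equivalently, f_q(y_{G₁⋈G₂}) = f_q(y_{G₁})·f_q(y_{G₂}) wherever defined, where f_q(y) = 1 + q/(y−1)). -/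

import Mathlib

open Polynomial

noncomputable section

/-- A finite (undirected) multigraph: a finite vertex type, a finite edge index type,
and a map assigning to each edge its pair of endpoints. -/
structure Multigraph where
  V : Type
  E : Type
  [finV : Finite V]
  [finE : Fintype E]
  ends : E → V × V

attribute [instance] Multigraph.finV Multigraph.finE

namespace Multigraph

/-- The spanning subgraph `(V, F)` determined by a set `F` of edges, as a simple graph
recording adjacency. -/
def spanning (G : Multigraph) (F : Finset G.E) : SimpleGraph G.V where
  Adj u v := u ≠ v ∧ ∃ e ∈ F, G.ends e = (u, v) ∨ G.ends e = (v, u)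
  symm := by
    refine ⟨?_⟩
    rintro u v ⟨huv, e, he, h⟩
    exact ⟨huv.symm, e, he, h.symm⟩
  loopless := by refine ⟨?_⟩; rintro v ⟨hv, -⟩; exact hv rfl

/-- `k(F)`: the number of connected components of the spanning subgraph `(V, F)`. -/
def k (G : Multigraph) (F : Finset G.E) : ℕ :=
  Nat.card (G.spanning F).ConnectedComponent

/-- The chromatic polynomial `Z(G;q) = ∑_{F ⊆ E} (-1)^{|F|} q^{k(F)}`. -/
def Z (G : Multigraph) : Polynomial ℂ :=
  ∑ F : Finset G.E, (-1 : Polynomial ℂ) ^ F.card * X ^ G.k F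

/-- A multigraph is loopless if no edge has equal endpoints. -/
def Loopless (G : Multigraph) : Prop := ∀ e : G.E, (G.ends e).1 ≠ (G.ends e).2

/-- The degree of a vertex: the number of edge-ends incident to it. -/
def degree (G : Multigraph) (x : G.V) : ℕ :=
  Nat.card {e : G.E // (G.ends e).1 = x} + Nat.card {e : G.E // (G.ends e).2 = x}

end Multigraph

/-- A two-terminal graph: a finite multigraph together with two distinct
distinguished vertices, the start vertex `s` and the end vertex `t`. -/
structure TTGraph extends Multigraph where
  s : V
  t : V
  hst : s ≠ t

namespace TTGraph

/-- The chromatic polynomial of (the underlying multigraph of) a two-terminal graph. -/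
def Z (G : TTGraph) : Polynomial ℂ := G.toMultigraph.Z

def Loopless (G : TTGraph) : Prop := G.toMultigraph.Loopless

/-- A single edge `K₂`, with its two endpoints as terminals. -/
def K2 : TTGraph where
  V := Bool
  E := Unit
  ends := fun _ => (false, true)
  s := false
  t := true
  hst := Bool.false_ne_true

/-- The identification map used in the parallel composition: `s₂ ↦ s₁`, `t₂ ↦ t₁`. -/
def parMap (G₁ G₂ : TTGraph) (x : G₂.V) :
    G₁.V ⊕ {y : G₂.V // y ≠ G₂.s ∧ y ≠ G₂.t} := by
  classical
  exact if h1 : x = G₂.s then Sum.inl G₁.s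
    else if h2 : x = G₂.t then Sum.inl G₁.t
    else Sum.inr ⟨x, h1, h2⟩

/-- Parallel composition of two-terminal graphs: the disjoint union with `s₁` and `s₂`
identified (the new start) and `t₁` and `t₂` identified (the new end). -/
def par (G₁ G₂ : TTGraph) : TTGraph where
  V := G₁.V ⊕ {y : G₂.V // y ≠ G₂.s ∧ y ≠ G₂.t}
  E := G₁.E ⊕ G₂.E
  ends := Sum.elim
    (fun e => (Sum.inl (G₁.ends e).1, Sum.inl (G₁.ends e).2))
    (fun e => (parMap G₁ G₂ (G₂.ends e).1, parMap G₁ G₂ (G₂.ends e).2))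
  s := Sum.inl G₁.s
  t := Sum.inl G₁.t
  hst := fun h => G₁.hst (Sum.inl.inj h)

/-- The identification map used in the series composition: `s₂ ↦ t₁`. -/
def serMap (G₁ G₂ : TTGraph) (x : G₂.V) :
    G₁.V ⊕ {y : G₂.V // y ≠ G₂.s} := by
  classical
  exact if h : x = G₂.s then Sum.inl G₁.t else Sum.inr ⟨x, h⟩

/-- Series composition of two-terminal graphs: the disjoint union with `t₁` and `s₂`
identified; the new start is `s₁` and the new end is `t₂`. -/
def ser (G₁ G₂ : TTGraph) : TTGraph where
  V := G₁.V ⊕ {y : G₂.V // y ≠ G₂.s}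
  E := G₁.E ⊕ G₂.E
  ends := Sum.elim
    (fun e => (Sum.inl (G₁.ends e).1, Sum.inl (G₁.ends e).2))
    (fun e => (serMap G₁ G₂ (G₂.ends e).1, serMap G₁ G₂ (G₂.ends e).2))
  s := Sum.inl G₁.s
  t := Sum.inr ⟨G₂.t, G₂.hst.symm⟩
  hst := Sum.inl_ne_inr

/-- `Z^dif(G;q) := Z(G ∥ K₂; q)`. -/
def Zdif (G : TTGraph) : Polynomial ℂ := (G.par K2).Z

/-- `Z^same(G;q) := Z(G;q) - Z^dif(G;q)`. -/
def Zsame (G : TTGraph) : Polynomial ℂ := G.Z - G.Zdif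

/-- Series-parallel two-terminal graphs: those obtained from a single edge `K₂` by
repeated series and parallel compositions. -/
inductive IsSP : TTGraph → Prop
  | K2 : IsSP K2
  | ser {G₁ G₂ : TTGraph} : IsSP G₁ → IsSP G₂ → IsSP (G₁.ser G₂)
  | par {G₁ G₂ : TTGraph} : IsSP G₁ → IsSP G₂ → IsSP (G₁.par G₂)

/-- No edge of `G` joins the two terminals (membership in `𝒢*_SP` for series-parallel `G`). -/
def NoSTEdge (G : TTGraph) : Prop :=
  ∀ e : G.E, G.ends e ≠ (G.s, G.t) ∧ G.ends e ≠ (G.t, G.s)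

end TTGraph


/-- The effective edge interaction `y_G = (q-1)·Z^same(G;q)/Z^dif(G;q)` as an element
of the field `ℂ(q)` of rational functions. -/
def TTGraph.y (G : TTGraph) : RatFunc ℂ :=
  (RatFunc.X - 1) * algebraMap (Polynomial ℂ) (RatFunc ℂ) G.Zsame /
    algebraMap (Polynomial ℂ) (RatFunc ℂ) G.Zdif

/-!
Evaluate at `q = n ∈ ℕ`, where `Z(G; n)` counts proper `n`-colorings. Permuting colors shows
that the number of proper colorings of a two-terminal graph with terminal colors `(a, b)` is
some `A_G` when `a = b` and some `B_G` when `a ≠ b`, so `Z^same(G; n) = n A_G` and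
`Z^dif(G; n) = n (n - 1) B_G`. Parallel composition multiplies these counts; series composition
sums over the color of the glued vertex, giving `A = A₁A₂ + (n - 1) B₁B₂` and
`B = A₁B₂ + B₁A₂ + (n - 2) B₁B₂`. These are polynomial identities in `n`, hence in `ℂ[q]`, and
the formulas for the effective interactions follow by clearing denominators in `ℂ(q)`. The
denominator `Z^dif(G₁ ⋈ G₂)` is nonzero because `Z^dif(G) ≠ 0` exactly when `G` is loopless.
-/

namespace SimpleGraph

variable {V β : Type*} (H : SimpleGraph V)

def componentFunEquiv :
    {f : V → β // ∀ u v, H.Adj u v → f u = f v} ≃ (H.ConnectedComponent → β) where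
  toFun f := Quot.lift f.1 fun u v (huv : H.Reachable u v) => by
    rw [reachable_iff_reflTransGen] at huv
    induction huv with
    | refl => rfl
    | tail _ hadj ih => exact ih.trans (f.2 _ _ hadj)
  invFun g := ⟨fun v => g (H.connectedComponentMk v),
    fun _ _ h => congrArg g (ConnectedComponent.connectedComponentMk_eq_of_adj h)⟩
  left_inv _ := rfl
  right_inv g := funext fun c => by induction c using ConnectedComponent.ind; rfl

end SimpleGraph

lemma Nat.card_eq_sum_card_fiber {X β : Type*} [Finite X] [Fintype β] (f : X → β) :
    Nat.card X = ∑ b, Nat.card {x // f x = b} := by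
  rw [← Nat.card_congr (Equiv.sigmaFiberEquiv f), Nat.card_sigma]

lemma Equiv.Perm.exists_apply_eq_and_apply_eq {α : Type*} [DecidableEq α] {a b a' b' : α}
    (h : a = b ↔ a' = b') : ∃ π : Equiv.Perm α, π a = a' ∧ π b = b' := by
  by_cases hab : a = b
  · subst hab
    obtain rfl := h.1 rfl
    exact ⟨swap a a', swap_apply_left a a', swap_apply_left a a'⟩
  · have ha'b' : a' ≠ b' := mt h.2 hab
    set τ := swap a a'
    have hτb : τ b ≠ a' := fun hb => hab (τ.injective (hb.trans (swap_apply_left a a').symm)).symm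
    refine ⟨swap (τ b) b' * τ, ?_, swap_apply_left _ _⟩
    rw [Perm.mul_apply, swap_apply_left, swap_apply_of_ne_of_ne hτb.symm ha'b']

section ColorSums

variable {α R : Type*} [Fintype α] [DecidableEq α] [CommRing R]

lemma Fintype.sum_ite_eq_eq_add (c : α) (x y : R) :
    ∑ d : α, (if c = d then x else y) = x + (Fintype.card α - 1) * y := by
  have hsplit (d : α) : (if c = d then x else y) = y + if c = d then x - y else 0 := by
    split_ifs <;> ring
  simp only [hsplit, Finset.sum_add_distrib, Finset.sum_ite_eq, Finset.mem_univ, if_true,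
    Finset.sum_const, Finset.card_univ, nsmul_eq_mul]
  ring

lemma Fintype.sum_sum_ite_eq (x y : R) :
    ∑ c : α, ∑ d : α, (if c = d then x else y) =
      Fintype.card α * x + Fintype.card α * (Fintype.card α - 1) * y := by
  simp only [Fintype.sum_ite_eq_eq_add, Finset.sum_const, Finset.card_univ, nsmul_eq_mul]
  ring


lemma Fintype.sum_ite_mul_ite_self (a : α) (x₁ y₁ x₂ y₂ : R) :
    ∑ c : α, (if a = c then x₁ else y₁) * (if c = a then x₂ else y₂) =
      x₁ * x₂ + (Fintype.card α - 1) * (y₁ * y₂) := by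
  have hprod (c : α) : (if a = c then x₁ else y₁) * (if c = a then x₂ else y₂) =
      if a = c then x₁ * x₂ else y₁ * y₂ := by
    rcases eq_or_ne a c with rfl | h
    · simp
    · simp [h, h.symm]
  simp only [hprod, Fintype.sum_ite_eq_eq_add]

lemma Fintype.sum_ite_mul_ite_of_ne {a b : α} (hab : a ≠ b) (x₁ y₁ x₂ y₂ : R) :
    ∑ c : α, (if a = c then x₁ else y₁) * (if c = b then x₂ else y₂) =
      x₁ * y₂ + y₁ * x₂ + (Fintype.card α - 2) * (y₁ * y₂) := by
  have hsplit (c : α) : (if a = c then x₁ else y₁) * (if c = b then x₂ else y₂) =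
      y₁ * y₂ + ((if a = c then (x₁ - y₁) * y₂ else 0) + if b = c then y₁ * (x₂ - y₂) else 0) := by
    by_cases hac : a = c <;> by_cases hbc : b = c
    · exact absurd (hac.trans hbc.symm) hab
    all_goals simp only [hac, hbc, eq_comm (a := c), if_true, if_false]; ring
  simp only [hsplit, Finset.sum_add_distrib, Finset.sum_ite_eq, Finset.mem_univ, if_true,
    Finset.sum_const, Finset.card_univ, nsmul_eq_mul]
  ring

end ColorSums

lemma Polynomial.eq_of_forall_eval_card {R : Type*} [CommRing R] [IsDomain R] [CharZero R]
    {p q : R[X]} (h : ∀ (α : Type) [Fintype α] [Nontrivial α],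
      p.eval (Fintype.card α : R) = q.eval (Fintype.card α : R)) : p = q := by
  refine eq_of_infinite_eval_eq p q (((Set.Ici_infinite 2).image
    Nat.cast_injective.injOn).mono ?_)
  rintro _ ⟨n, hn, rfl⟩
  have : Nontrivial (Fin n) := Fin.nontrivial_iff_two_le.2 hn
  simpa using h (Fin n)

namespace Multigraph

variable (G : Multigraph) {α : Type*}

noncomputable instance fintypeV : Fintype G.V := Fintype.ofFinite _

def IsProperColoring (σ : G.V → α) : Prop := ∀ e, σ (G.ends e).1 ≠ σ (G.ends e).2

lemma forall_mem_eq_iff_forall_adj (F : Finset G.E) (σ : G.V → α) :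
    (∀ e ∈ F, σ (G.ends e).1 = σ (G.ends e).2) ↔ ∀ u v, (G.spanning F).Adj u v → σ u = σ v := by
  refine ⟨?_, fun h e he => ?_⟩
  · rintro h u v ⟨-, e, he, huv | huv⟩
    · simpa [huv] using h e he
    · simpa [huv] using (h e he).symm
  · by_cases hne : (G.ends e).1 = (G.ends e).2
    · rw [hne]
    · exact h _ _ ⟨hne, e, he, Or.inl rfl⟩

lemma card_forall_mem_eq [Fintype α] (F : Finset G.E) :
    Nat.card {σ : G.V → α // ∀ e ∈ F, σ (G.ends e).1 = σ (G.ends e).2} =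
      Fintype.card α ^ G.k F := by
  rw [Nat.card_congr ((Equiv.subtypeEquivRight (G.forall_mem_eq_iff_forall_adj F)).trans
    (G.spanning F).componentFunEquiv), Nat.card_fun, Nat.card_eq_fintype_card, k]

open Classical in
theorem eval_Z [Fintype α] :
    G.Z.eval (Fintype.card α : ℂ) = Nat.card {σ : G.V → α // G.IsProperColoring σ} := by
  let mono (σ : G.V → α) : Finset G.E := {e | σ (G.ends e).1 = σ (G.ends e).2}
  have hmono (σ : G.V → α) : G.IsProperColoring σ ↔ mono σ = ∅ := by
    simp [mono, IsProperColoring, Finset.filter_eq_empty_iff]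
  have key : (∑ F : Finset G.E, (-1 : ℤ) ^ F.card * (Fintype.card α : ℤ) ^ G.k F) =
      Nat.card {σ : G.V → α // G.IsProperColoring σ} := calc
    _ = ∑ F : Finset G.E, ∑ σ : G.V → α, if F ⊆ mono σ then (-1 : ℤ) ^ F.card else 0 := by
      refine Finset.sum_congr rfl fun F _ => ?_
      rw [← Nat.cast_pow, ← G.card_forall_mem_eq F, Nat.card_eq_fintype_card,
        Fintype.card_subtype, ← Finset.sum_boole, Finset.mul_sum]
      simp [mono, Finset.subset_iff]
    _ = ∑ σ : G.V → α, ∑ F ∈ (mono σ).powerset, (-1 : ℤ) ^ F.card := by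
      rw [Finset.sum_comm]
      simp [Finset.sum_ite, Finset.filter_subset_univ]
    _ = _ := by
      simp_rw [Finset.sum_powerset_neg_one_pow_card, ← hmono]
      rw [Nat.card_eq_fintype_card, Fintype.card_subtype, Finset.sum_boole]
  rw [← Int.cast_natCast (R := ℂ) (Nat.card _), ← key, Z, Polynomial.eval_finsetSum]
  simp

variable {G}

lemma Loopless.isProperColoring (hG : G.Loopless) {σ : G.V → α} (hσ : Function.Injective σ) :
    G.IsProperColoring σ :=
  fun e he => hG e (hσ he)

lemma IsProperColoring.loopless {σ : G.V → α} (hσ : G.IsProperColoring σ) : G.Loopless :=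
  fun e he => hσ e (congrArg σ he)

end Multigraph

namespace TTGraph

variable {α : Type*}

section Colorings

variable (G : TTGraph)

abbrev ColoringWith (a b : α) : Type _ :=
  {σ : G.V → α // G.IsProperColoring σ ∧ σ G.s = a ∧ σ G.t = b}

def coloringCount (a b : α) : ℕ := Nat.card (G.ColoringWith a b)

lemma coloringCount_perm (π : Equiv.Perm α) (a b : α) :
    G.coloringCount (π a) (π b) = G.coloringCount a b := by
  refine Nat.card_congr
    { toFun σ := ⟨π.symm ∘ σ.1, fun e he => σ.2.1 e (π.symm.injective he), ?_, ?_⟩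
      invFun σ := ⟨π ∘ σ.1, fun e he => σ.2.1 e (π.injective he), ?_, ?_⟩
      left_inv σ := by ext; simp
      right_inv σ := by ext; simp } <;>
  simp [σ.2.2.1, σ.2.2.2]

variable [DecidableEq α] {a b : α}

lemma coloringCount_eq_ite (hab : a ≠ b) (c d : α) :
    G.coloringCount c d = if c = d then G.coloringCount a a else G.coloringCount a b := by
  have hpattern : c = d ↔ (if c = d then a else a) = if c = d then a else b := by
    split_ifs <;> simp_all
  obtain ⟨π, hπc, hπd⟩ := Equiv.Perm.exists_apply_eq_and_apply_eq hpattern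
  rw [← G.coloringCount_perm π, hπc, hπd]
  split_ifs <;> rfl

lemma cast_coloringCount_eq_ite {R : Type*} [AddMonoidWithOne R] (hab : a ≠ b) (c d : α) :
    (G.coloringCount c d : R) =
      if c = d then (G.coloringCount a a : R) else (G.coloringCount a b : R) := by
  rw [G.coloringCount_eq_ite hab]
  push_cast
  rfl

omit [DecidableEq α] in
lemma card_isProperColoring_eq_sum [Fintype α] :
    Nat.card {σ : G.V → α // G.IsProperColoring σ} = ∑ c : α, ∑ d : α, G.coloringCount c d := by
  rw [Nat.card_eq_sum_card_fiber (fun σ : {σ // G.IsProperColoring σ} => (σ.1 G.s, σ.1 G.t)),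
    Fintype.sum_prod_type]
  refine Finset.sum_congr rfl fun c _ => Finset.sum_congr rfl fun d _ => Nat.card_congr ?_
  exact (Equiv.subtypeSubtypeEquivSubtypeInter (G.IsProperColoring ·)
    (fun σ => (σ G.s, σ G.t) = (c, d))).trans (Equiv.subtypeEquivRight fun σ => by simp)

end Colorings

variable (G₁ G₂ : TTGraph)

lemma parMap_s : parMap G₁ G₂ G₂.s = .inl G₁.s := by simp [parMap]

lemma parMap_t : parMap G₁ G₂ G₂.t = .inl G₁.t := by simp [parMap, G₂.hst.symm]

lemma parMap_of_ne {y : G₂.V} (hs : y ≠ G₂.s) (ht : y ≠ G₂.t) :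
    parMap G₁ G₂ y = .inr ⟨y, hs, ht⟩ := by
  simp [parMap, hs, ht]

lemma elim_parMap {σ₁ : G₁.V → α} {σ₂ : G₂.V → α} (hs : σ₁ G₁.s = σ₂ G₂.s)
    (ht : σ₁ G₁.t = σ₂ G₂.t) (y : G₂.V) :
    Sum.elim σ₁ (σ₂ ∘ Subtype.val) (parMap G₁ G₂ y) = σ₂ y := by
  unfold parMap
  split_ifs <;> simp_all

def parColoringEquiv (a b : α) :
    (G₁.par G₂).ColoringWith a b ≃ G₁.ColoringWith a b × G₂.ColoringWith a b where
  toFun σ := (⟨σ.1 ∘ .inl, fun e => σ.2.1 (.inl e), σ.2.2⟩,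
    ⟨σ.1 ∘ parMap G₁ G₂, fun e => σ.2.1 (.inr e), (congrArg σ.1 (parMap_s G₁ G₂)).trans σ.2.2.1,
      (congrArg σ.1 (parMap_t G₁ G₂)).trans σ.2.2.2⟩)
  invFun σ := ⟨Sum.elim σ.1.1 (σ.2.1 ∘ Subtype.val), by
    have hs : σ.1.1 G₁.s = σ.2.1 G₂.s := σ.1.2.2.1.trans σ.2.2.2.1.symm
    have ht : σ.1.1 G₁.t = σ.2.1 G₂.t := σ.1.2.2.2.trans σ.2.2.2.2.symm
    refine ⟨Sum.forall.2 ⟨σ.1.2.1, fun e => ?_⟩, σ.1.2.2⟩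
    simpa [par, elim_parMap G₁ G₂ hs ht] using σ.2.2.1 e⟩
  left_inv σ := by
    ext (v | ⟨y, hs, ht⟩)
    · rfl
    · exact congrArg σ.1 (parMap_of_ne G₁ G₂ hs ht)
  right_inv σ := by
    ext v
    · rfl
    · exact elim_parMap G₁ G₂ (σ.1.2.2.1.trans σ.2.2.2.1.symm)
        (σ.1.2.2.2.trans σ.2.2.2.2.symm) v

lemma coloringCount_par (a b : α) :
    (G₁.par G₂).coloringCount a b = G₁.coloringCount a b * G₂.coloringCount a b := by
  rw [coloringCount, Nat.card_congr (parColoringEquiv G₁ G₂ a b), Nat.card_prod]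
  rfl

lemma coloringCount_K2 [DecidableEq α] (a b : α) :
    K2.coloringCount a b = if a = b then 0 else 1 := by
  split_ifs with hab
  · subst hab
    have : IsEmpty (K2.ColoringWith a a) := ⟨fun σ => σ.2.1 () (σ.2.2.1.trans σ.2.2.2.symm)⟩
    exact Nat.card_of_isEmpty
  · refine Nat.card_eq_one_iff_exists.2
      ⟨⟨(fun v : Bool => cond v b a : K2.V → α), fun _ => hab, rfl, rfl⟩, ?_⟩
    rintro ⟨σ, -, hs, ht⟩
    ext (_ | _)
    exacts [hs, ht]

lemma serMap_s : serMap G₁ G₂ G₂.s = .inl G₁.t := by simp [serMap]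

lemma serMap_of_ne {y : G₂.V} (h : y ≠ G₂.s) : serMap G₁ G₂ y = .inr ⟨y, h⟩ := by
  simp [serMap, h]

lemma serMap_injective : Function.Injective (serMap G₁ G₂) := by
  intro x y hxy
  by_cases hx : x = G₂.s <;> by_cases hy : y = G₂.s
  · rw [hx, hy]
  all_goals simp_all [serMap_s, serMap_of_ne]

lemma elim_serMap {σ₁ : G₁.V → α} {σ₂ : G₂.V → α} (h : σ₁ G₁.t = σ₂ G₂.s) (y : G₂.V) :
    Sum.elim σ₁ (σ₂ ∘ Subtype.val) (serMap G₁ G₂ y) = σ₂ y := by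
  unfold serMap
  split_ifs <;> simp_all

def serColoringEquiv (a c b : α) :
    {σ : (G₁.ser G₂).ColoringWith a b // σ.1 (.inl G₁.t) = c} ≃
      G₁.ColoringWith a c × G₂.ColoringWith c b where
  toFun σ := (⟨σ.1.1 ∘ .inl, fun e => σ.1.2.1 (.inl e), σ.1.2.2.1, σ.2⟩,
    ⟨σ.1.1 ∘ serMap G₁ G₂, fun e => σ.1.2.1 (.inr e), (congrArg σ.1.1 (serMap_s G₁ G₂)).trans σ.2,
      (congrArg σ.1.1 (serMap_of_ne G₁ G₂ G₂.hst.symm)).trans σ.1.2.2.2⟩)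
  invFun σ := ⟨⟨Sum.elim σ.1.1 (σ.2.1 ∘ Subtype.val), by
    have h : σ.1.1 G₁.t = σ.2.1 G₂.s := σ.1.2.2.2.trans σ.2.2.2.1.symm
    refine ⟨Sum.forall.2 ⟨σ.1.2.1, fun e => ?_⟩, σ.1.2.2.1, σ.2.2.2.2⟩
    simpa [ser, elim_serMap G₁ G₂ h] using σ.2.2.1 e⟩, σ.1.2.2.2⟩
  left_inv σ := by
    ext (v | ⟨y, hy⟩)
    · rfl
    · exact congrArg σ.1.1 (serMap_of_ne G₁ G₂ hy)
  right_inv σ := by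
    ext v
    · rfl
    · exact elim_serMap G₁ G₂ (σ.1.2.2.2.trans σ.2.2.2.1.symm) v

lemma coloringCount_ser [Fintype α] (a b : α) :
    (G₁.ser G₂).coloringCount a b = ∑ c, G₁.coloringCount a c * G₂.coloringCount c b := by
  rw [coloringCount, Nat.card_eq_sum_card_fiber fun σ : (G₁.ser G₂).ColoringWith a b =>
    σ.1 (.inl G₁.t)]
  refine Finset.sum_congr rfl fun c _ => ?_
  rw [Nat.card_congr (serColoringEquiv G₁ G₂ a c b), Nat.card_prod]
  rfl

variable {G₁ G₂} in
lemma Loopless.ser (h₁ : G₁.Loopless) (h₂ : G₂.Loopless) : (G₁.ser G₂).Loopless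
  | .inl e => fun he => h₁ e (Sum.inl_injective he)
  | .inr e => fun he => h₂ e (serMap_injective G₁ G₂ he)

section Evaluation

variable (G : TTGraph) [Fintype α]

lemma eval_Z_eq_sum :
    G.Z.eval (Fintype.card α : ℂ) = ∑ c : α, ∑ d : α, (G.coloringCount c d : ℂ) := by
  rw [Z, Multigraph.eval_Z, card_isProperColoring_eq_sum]
  push_cast
  rfl

variable [DecidableEq α]

lemma eval_Zdif_eq_sum : G.Zdif.eval (Fintype.card α : ℂ) =
    ∑ c : α, ∑ d : α, if c = d then 0 else (G.coloringCount c d : ℂ) := by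
  simp only [Zdif, eval_Z_eq_sum, coloringCount_par, coloringCount_K2]
  push_cast
  simp only [mul_ite, mul_zero, mul_one]

variable {a b : α}

lemma eval_Zdif_of_ne (hab : a ≠ b) :
    G.Zdif.eval (Fintype.card α : ℂ) =
      Fintype.card α * (Fintype.card α - 1) * G.coloringCount a b := by
  have hcount (c d : α) : (if c = d then 0 else (G.coloringCount c d : ℂ)) =
      if c = d then 0 else (G.coloringCount a b : ℂ) := by
    split_ifs with h
    · rfl
    · rw [G.cast_coloringCount_eq_ite hab, if_neg h]
  simp only [eval_Zdif_eq_sum, hcount, Fintype.sum_sum_ite_eq]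
  ring

lemma eval_Zsame_of_ne (hab : a ≠ b) :
    G.Zsame.eval (Fintype.card α : ℂ) = Fintype.card α * G.coloringCount a a := by
  rw [Zsame, eval_sub, eval_Zdif_of_ne G hab, eval_Z_eq_sum,
    Finset.sum_congr rfl fun c _ => Finset.sum_congr rfl fun d _ =>
      G.cast_coloringCount_eq_ite hab c d,
    Fintype.sum_sum_ite_eq]
  ring

end Evaluation

lemma Zdif_ne_zero_iff_loopless (G : TTGraph) : G.Zdif ≠ 0 ↔ G.Loopless := by
  classical
  refine ⟨fun hZ => by_contra fun hG => hZ ?_, fun hG hZ => ?_⟩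
  · refine Polynomial.eq_of_forall_eval_card fun α _ _ => ?_
    obtain ⟨a, b, hab⟩ := exists_pair_ne α
    have : IsEmpty (G.ColoringWith a b) := ⟨fun σ => hG σ.2.1.loopless⟩
    simp [eval_Zdif_of_ne G hab, coloringCount]
  · have hV : 2 ≤ Fintype.card G.V := Fintype.one_lt_card_iff.2 ⟨G.s, G.t, G.hst⟩
    have : Nonempty (G.ColoringWith G.s G.t) :=
      ⟨⟨id, hG.isProperColoring Function.injective_id, rfl, rfl⟩⟩
    have hcount : 0 < G.coloringCount G.s G.t := Nat.card_pos
    have heval := eval_Zdif_of_ne G G.hst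
    rw [hZ, eval_zero, ← Nat.cast_one, ← Nat.cast_sub (by omega)] at heval
    have hpos : 0 < Fintype.card G.V * (Fintype.card G.V - 1) * G.coloringCount G.s G.t :=
      Nat.mul_pos (Nat.mul_pos (by omega) (by omega)) hcount
    exact hpos.ne (by exact_mod_cast heval)

section SeriesCounts

variable {R : Type*} [CommRing R] [Fintype α] [DecidableEq α] {a b : α}

lemma cast_coloringCount_ser_self (hab : a ≠ b) :
    ((G₁.ser G₂).coloringCount a a : R) =
      G₁.coloringCount a a * G₂.coloringCount a a +
        (Fintype.card α - 1) * (G₁.coloringCount a b * G₂.coloringCount a b) := by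
  rw [coloringCount_ser, Nat.cast_sum, ← Fintype.sum_ite_mul_ite_self]
  refine Finset.sum_congr rfl fun c _ => ?_
  rw [Nat.cast_mul, G₁.cast_coloringCount_eq_ite hab a c, G₂.cast_coloringCount_eq_ite hab c a]

lemma cast_coloringCount_ser_of_ne (hab : a ≠ b) :
    ((G₁.ser G₂).coloringCount a b : R) =
      G₁.coloringCount a a * G₂.coloringCount a b + G₁.coloringCount a b * G₂.coloringCount a a +
        (Fintype.card α - 2) * (G₁.coloringCount a b * G₂.coloringCount a b) := by
  rw [coloringCount_ser, Nat.cast_sum, ← Fintype.sum_ite_mul_ite_of_ne hab]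
  refine Finset.sum_congr rfl fun c _ => ?_
  rw [Nat.cast_mul, G₁.cast_coloringCount_eq_ite hab a c, G₂.cast_coloringCount_eq_ite hab c b]

end SeriesCounts

lemma X_mul_Zsame_par : (X : ℂ[X]) * (G₁.par G₂).Zsame = G₁.Zsame * G₂.Zsame := by
  refine Polynomial.eq_of_forall_eval_card fun α _ _ => ?_
  classical
  obtain ⟨a, b, hab⟩ := exists_pair_ne α
  simp only [eval_mul, eval_X, eval_Zsame_of_ne _ hab, coloringCount_par, Nat.cast_mul]
  ring

lemma X_mul_X_sub_one_mul_Zdif_par :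
    (X : ℂ[X]) * (X - 1) * (G₁.par G₂).Zdif = G₁.Zdif * G₂.Zdif := by
  refine Polynomial.eq_of_forall_eval_card fun α _ _ => ?_
  classical
  obtain ⟨a, b, hab⟩ := exists_pair_ne α
  simp only [eval_mul, eval_sub, eval_X, eval_one, eval_Zdif_of_ne _ hab, coloringCount_par,
    Nat.cast_mul]
  ring

lemma X_mul_X_sub_one_mul_Zsame_ser :
    (X : ℂ[X]) * (X - 1) * (G₁.ser G₂).Zsame =
      (X - 1) * (G₁.Zsame * G₂.Zsame) + G₁.Zdif * G₂.Zdif := by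
  refine Polynomial.eq_of_forall_eval_card fun α _ _ => ?_
  classical
  obtain ⟨a, b, hab⟩ := exists_pair_ne α
  simp only [eval_mul, eval_add, eval_sub, eval_X, eval_one, eval_Zsame_of_ne _ hab,
    eval_Zdif_of_ne _ hab, cast_coloringCount_ser_self _ _ hab]
  ring

lemma X_mul_X_sub_one_mul_Zdif_ser :
    (X : ℂ[X]) * (X - 1) * (G₁.ser G₂).Zdif =
      (X - 1) * (G₁.Zsame * G₂.Zdif + G₁.Zdif * G₂.Zsame) + (X - 2) * (G₁.Zdif * G₂.Zdif) := by
  refine Polynomial.eq_of_forall_eval_card fun α _ _ => ?_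
  classical
  obtain ⟨a, b, hab⟩ := exists_pair_ne α
  simp only [eval_mul, eval_add, eval_sub, eval_X, eval_one, eval_ofNat, eval_Zsame_of_ne _ hab,
    eval_Zdif_of_ne _ hab, cast_coloringCount_ser_of_ne _ _ hab]
  ring

end TTGraph

lemma par_interaction_identity {K : Type*} [Field K] {q S₁ D₁ S₂ D₂ S D : K}
    (hD₁ : D₁ ≠ 0) (hD₂ : D₂ ≠ 0) (hS : q * S = S₁ * S₂) (hD : q * (q - 1) * D = D₁ * D₂) :
    (q - 1) * S / D = (q - 1) * S₁ / D₁ * ((q - 1) * S₂ / D₂) := by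
  have hD₁₂ : D₁ * D₂ ≠ 0 := mul_ne_zero hD₁ hD₂
  have hD₀ : D ≠ 0 := right_ne_zero_of_mul (hD ▸ hD₁₂)
  rw [div_mul_div_comm, div_eq_div_iff hD₀ hD₁₂]
  linear_combination (q - 1) ^ 2 * D * hS - (q - 1) * S * hD

lemma ser_interaction_identity {K : Type*} [Field K] {q S₁ D₁ S₂ D₂ S D : K}
    (hD₁ : D₁ ≠ 0) (hD₂ : D₂ ≠ 0) (hD₀ : D ≠ 0)
    (hS : q * (q - 1) * S = (q - 1) * (S₁ * S₂) + D₁ * D₂)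
    (hD : q * (q - 1) * D = (q - 1) * (S₁ * D₂ + D₁ * S₂) + (q - 2) * (D₁ * D₂)) :
    (q - 1) * S / D * ((q - 1) * S₁ / D₁ + (q - 1) * S₂ / D₂ + q - 2) =
      (q - 1) * S₁ / D₁ * ((q - 1) * S₂ / D₂) + q - 1 := by
  field_simp
  linear_combination (q - 1) * D * hS - (q - 1) * S * hD

theorem effective_interaction_composition_general (G₁ G₂ : TTGraph)
    (hd₁ : G₁.Zdif ≠ 0) (hd₂ : G₂.Zdif ≠ 0) :
    (G₁.par G₂).y = G₁.y * G₂.y ∧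
    (G₁.ser G₂).y * (G₁.y + G₂.y + RatFunc.X - 2) = G₁.y * G₂.y + RatFunc.X - 1 := by
  have hd : (G₁.ser G₂).Zdif ≠ 0 := (G₁.ser G₂).Zdif_ne_zero_iff_loopless.2 <|
    (G₁.Zdif_ne_zero_iff_loopless.1 hd₁).ser (G₂.Zdif_ne_zero_iff_loopless.1 hd₂)
  let φ := algebraMap ℂ[X] (RatFunc ℂ)
  have hφ {p : ℂ[X]} (hp : p ≠ 0) : φ p ≠ 0 := RatFunc.algebraMap_ne_zero hp
  refine ⟨par_interaction_identity (hφ hd₁) (hφ hd₂) ?_ ?_,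
    ser_interaction_identity (hφ hd₁) (hφ hd₂) (hφ hd) ?_ ?_⟩
  · simpa [φ] using congrArg φ (G₁.X_mul_Zsame_par G₂)
  · simpa [φ] using congrArg φ (G₁.X_mul_X_sub_one_mul_Zdif_par G₂)
  · simpa [φ] using congrArg φ (G₁.X_mul_X_sub_one_mul_Zsame_ser G₂)
  · simpa [φ, map_ofNat] using congrArg φ (G₁.X_mul_X_sub_one_mul_Zdif_ser G₂)

/-- **Theorem.** For two-terminal graphs with `Z^dif` not identically zero, the
effective edge interactions satisfy `y_{G₁∥G₂} = y_{G₁}·y_{G₂}` and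
`y_{G₁⋈G₂}·(y_{G₁} + y_{G₂} + q - 2) = y_{G₁}·y_{G₂} + q - 1` in `ℂ(q)`. -/
theorem effective_interaction_composition (G₁ G₂ : TTGraph)
    (h₁ : G₁.Loopless) (h₂ : G₂.Loopless)
    (hd₁ : G₁.Zdif ≠ 0) (hd₂ : G₂.Zdif ≠ 0) :
    (G₁.par G₂).y = G₁.y * G₂.y ∧
    (G₁.ser G₂).y * (G₁.y + G₂.y + RatFunc.X - 2) = G₁.y * G₂.y + RatFunc.X - 1 :=
  effective_interaction_composition_general G₁ G₂ hd₁ hd₂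

end
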